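/- Let T > 0, let A : [0,T] → M_{2m}(ℝ) be smooth and B₁, …, B_k ∈ M_{2m}(ℝ) satisfy B_iB_j = 0 for all i, j. Let S solve Ṡ = A(t)S, S(0) = I_{2m}, define B_i^j(t) by the recursion B_i⁰(t) := B_i, B_i^j(t) := (d/dt)B_i^{j−1}(t) + B_i^{j−1}(t)A(t) − A(t)B_i^{j−1}(t), and fix P ∈ M_{2m}(ℝ). Define Φ(u) := 2·Σ_{i,j=1}^k ∫₀ᵀ ∫₀ᵗ u_i(t) u_j(s) tr[ Pᵀ S(T) S(t)⁻¹ B_i S(t) S(s)⁻¹ B_j S(s) ] ds dt, and for δ ∈ (0,T) define Q_δ(u) := 2·Σ_{i,j=1}^k ∫₀^δ ∫₀ᵗ u_i(t) u_j(s) 𝒫_{i,j}(t,s) ds dt, where 𝒫_{i,j}(t,s) := tr[ Pᵀ S(T) ( s·B_iB_j¹(0) + t·B_i¹(0)B_j + (s²/2)·B_iB_j²(0) + (t²/2)·B_i²(0)B_j + ts·B_i¹(0)B_j¹(0) ) ]. Then there exists C > 0 such that for every δ ∈ (0,T) and every u ∈ L²([0,T]; ℝᵏ) vanishing a.e. outside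 [0,δ], |Φ(u) − Q_δ(u)| ≤ C·δ⁴·‖u‖²_{L²}. -/

import Mathlib

/-!
`S(t)` is invertible: a kernel vector `v` of `S(t₀)` makes `t ↦ S(t) v` a solution of the linear
equation `ẏ = A y` vanishing at `t₀`, hence at `0`, where it equals `v`. Write `N_i = S⁻¹ B_i S`,
so that the integrand of `Φ` is `tr(Pᵀ S(T) N_i(t) N_j(s))`. Differentiating `S⁻¹ C S` gives
`S⁻¹ (Ċ + C A - A C) S`, so the `j`-th derivative of `N_i` is `S⁻¹ B_i^j S`, and Taylor's theorem
gives `N_i(t) = B_i + t B_i¹(0) + (t²/2) B_i²(0) + O(t³)` uniformly on `[0, T]`. In the product of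
the expansions of `N_i(t)` and `N_j(s)`, `0 ≤ s ≤ t`, the constant term `B_i B_j` vanishes, the
terms of degree one and two make up `𝒫_{i,j}(t, s)`, and the rest is `O(t³)`. Since `u` vanishes
after `δ`, only `0 < s ≤ t ≤ δ` contributes, and `|u_i(t) u_j(s)| ≤ (u_i(t)² + u_j(s)²) / 2`
integrates over `[0, δ]²` to `δ (‖u_i‖² + ‖u_j‖²) / 2`.
-/

open MeasureTheory Matrix

namespace Stmt7

/-- The space `M_{2m}(ℝ)`, with indices `Fin m ⊕ Fin m`. -/
abbrev Mat (m : ℕ) := Matrix (Fin m ⊕ Fin m) (Fin m ⊕ Fin m) ℝ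

/-- `B⁰(t) := B`, `B^{j+1}(t) := (d/dt)B^j(t) + B^j(t)A(t) − A(t)B^j(t)`,
derivatives taken within `[0,T]`. -/
noncomputable def Bseq {m : ℕ} (T : ℝ) (A : ℝ → Mat m) (B : Mat m) : ℕ → ℝ → Mat m
  | 0, _ => B
  | j + 1, t =>
      (Matrix.of fun a b => derivWithin (fun r => Bseq T A B j r a b) (Set.Icc 0 T) t)
        + (Bseq T A B j t * A t - A t * Bseq T A B j t)

/-- `Φ(u) = P · D²₀E^{I,T}(u)
  = 2 Σ_{i,j} ∫₀ᵀ∫₀ᵗ u_i(t)u_j(s) tr[Pᵀ S(T) S(t)⁻¹B_iS(t) S(s)⁻¹B_jS(s)] ds dt`. -/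
noncomputable def Phi {m k : ℕ} (T : ℝ) (S : ℝ → Mat m) (B : Fin k → Mat m) (P : Mat m)
    (u : ℝ → Fin k → ℝ) : ℝ :=
  2 * ∑ i, ∑ j, ∫ t in (0 : ℝ)..T, ∫ s in (0 : ℝ)..t,
    u t i * u s j *
      Matrix.trace (Pᵀ * (S T * ((S t)⁻¹ * B i * S t * ((S s)⁻¹ * B j * S s))))

/-- `𝒫_{i,j}(t,s) = tr[Pᵀ S(T)(sB_iB_j¹(0) + tB_i¹(0)B_j + (s²/2)B_iB_j²(0)
  + (t²/2)B_i²(0)B_j + ts B_i¹(0)B_j¹(0))]`. -/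
noncomputable def Pcal {m k : ℕ} (T : ℝ) (A : ℝ → Mat m) (S : ℝ → Mat m)
    (B : Fin k → Mat m) (P : Mat m) (i j : Fin k) (t s : ℝ) : ℝ :=
  Matrix.trace (Pᵀ * (S T *
    (s • (B i * Bseq T A (B j) 1 0) + t • (Bseq T A (B i) 1 0 * B j)
      + (s ^ 2 / 2) • (B i * Bseq T A (B j) 2 0)
      + (t ^ 2 / 2) • (Bseq T A (B i) 2 0 * B j)
      + (t * s) • (Bseq T A (B i) 1 0 * Bseq T A (B j) 1 0))))

/-- `Q_δ(u) = 2 Σ_{i,j} ∫₀^δ∫₀ᵗ u_i(t)u_j(s) 𝒫_{i,j}(t,s) ds dt`. -/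
noncomputable def Qdelta {m k : ℕ} (T : ℝ) (A : ℝ → Mat m) (S : ℝ → Mat m)
    (B : Fin k → Mat m) (P : Mat m) (δ : ℝ) (u : ℝ → Fin k → ℝ) : ℝ :=
  2 * ∑ i, ∑ j, ∫ t in (0 : ℝ)..δ, ∫ s in (0 : ℝ)..t,
    u t i * u s j * Pcal T A S B P i j t s

open Set Filter
open scoped ContDiff

theorem contDiffOn_infty_of_hasDerivWithinAt {E : Type*} [NormedAddCommGroup E]
    [NormedSpace ℝ E] {f f' : ℝ → E} {s : Set ℝ} (hs : UniqueDiffOn ℝ s)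
    (hf : ∀ t ∈ s, HasDerivWithinAt f (f' t) s t)
    (hf' : ∀ n : ℕ, ContDiffOn ℝ n f s → ContDiffOn ℝ n f' s) : ContDiffOn ℝ ∞ f s := by
  refine contDiffOn_infty.2 fun n => ?_
  induction n with
  | zero => exact contDiffOn_zero.2 fun t ht => (hf t ht).continuousWithinAt
  | succ n ih =>
    rw [Nat.cast_succ, contDiffOn_succ_iff_derivWithin hs]
    refine ⟨fun t ht => (hf t ht).differentiableWithinAt, by simp, ?_⟩
    exact (hf' n ih).congr fun t ht => (hf t ht).derivWithin (hs t ht)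

theorem eqOn_zero_of_hasDerivWithinAt_mul_left {𝔸 : Type*} [NormedRing 𝔸] [NormedAlgebra ℝ 𝔸]
    {A Y : ℝ → 𝔸} {a b : ℝ} (hA : ContinuousOn A (Icc a b))
    (hY : ∀ t ∈ Icc a b, HasDerivWithinAt Y (A t * Y t) (Icc a b) t) (hb : Y b = 0) :
    EqOn Y 0 (Icc a b) := by
  obtain ⟨K, hK⟩ := isCompact_Icc.exists_bound_of_continuousOn hA
  have hLip : ∀ t ∈ Ioc a b, LipschitzOnWith K.toNNReal (A t * ·) univ := fun t ht =>
    LipschitzWith.lipschitzOnWith <| LipschitzWith.of_dist_le_mul fun x y => by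
      rw [dist_eq_norm, dist_eq_norm, ← mul_sub, Real.coe_toNNReal']
      exact (norm_mul_le _ _).trans <| mul_le_mul_of_nonneg_right
        ((hK t (Ioc_subset_Icc_self ht)).trans (le_max_left _ _)) (norm_nonneg _)
  have hleft : ∀ {Z : ℝ → 𝔸}, (∀ t ∈ Icc a b, HasDerivWithinAt Z (A t * Z t) (Icc a b) t) →
      ∀ t ∈ Ioc a b, HasDerivWithinAt Z (A t * Z t) (Iic t) t := fun hZ t ht =>
    (hZ t (Ioc_subset_Icc_self ht)).mono_of_mem_nhdsWithin (Icc_mem_nhdsLE_of_mem ht)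
  have hzero : ∀ t ∈ Icc a b, HasDerivWithinAt (0 : ℝ → 𝔸) (A t * (0 : ℝ → 𝔸) t) (Icc a b) t :=
    fun t _ => by rw [Pi.zero_apply, mul_zero]; exact hasDerivWithinAt_const t (Icc a b) 0
  exact ODE_solution_unique_of_mem_Icc_left hLip
    (fun t ht => (hY t ht).continuousWithinAt) (hleft hY) (fun _ _ => mem_univ _)
    continuousOn_const (hleft hzero) (fun _ _ => mem_univ _) hb

section Expansion

variable {𝔸 : Type*}

noncomputable def quadraticPoly [AddCommGroup 𝔸] [Module ℝ 𝔸] (X₀ X₁ X₂ : 𝔸) (t : ℝ) : 𝔸 :=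
  X₀ + t • X₁ + (t ^ 2 / 2) • X₂

/-- The terms of degree one and two of `quadraticPoly X₀ X₁ X₂ t * quadraticPoly Y₀ Y₁ Y₂ s`. -/
noncomputable def quadraticCross [Ring 𝔸] [Module ℝ 𝔸] (X₀ X₁ X₂ Y₀ Y₁ Y₂ : 𝔸) (t s : ℝ) : 𝔸 :=
  s • (X₀ * Y₁) + t • (X₁ * Y₀) + (s ^ 2 / 2) • (X₀ * Y₂) + (t ^ 2 / 2) • (X₂ * Y₀)
    + (t * s) • (X₁ * Y₁)

variable [NormedRing 𝔸] [NormedAlgebra ℝ 𝔸]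

theorem mul_sub_quadraticCross {X Y X₀ X₁ X₂ Y₀ Y₁ Y₂ : 𝔸} (t s : ℝ) (h : X₀ * Y₀ = 0) :
    X * Y - quadraticCross X₀ X₁ X₂ Y₀ Y₁ Y₂ t s
      = (X - quadraticPoly X₀ X₁ X₂ t) * Y
        + quadraticPoly X₀ X₁ X₂ t * (Y - quadraticPoly Y₀ Y₁ Y₂ s)
        + ((t * s ^ 2 / 2) • (X₁ * Y₂) + (t ^ 2 * s / 2) • (X₂ * Y₁)
          + (t ^ 2 * s ^ 2 / 4) • (X₂ * Y₂)) := by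
  simp only [quadraticPoly, quadraticCross, sub_mul, mul_sub, add_mul, mul_add, smul_mul_assoc,
    mul_smul_comm, h]
  module

theorem norm_mul_sub_quadraticCross_le {X Y X₀ X₁ X₂ Y₀ Y₁ Y₂ : 𝔸} {K T t s : ℝ}
    (h : X₀ * Y₀ = 0) (hs : 0 ≤ s) (hst : s ≤ t) (htT : t ≤ T)
    (hX : ‖X - quadraticPoly X₀ X₁ X₂ t‖ ≤ K * t ^ 3)
    (hY : ‖Y - quadraticPoly Y₀ Y₁ Y₂ s‖ ≤ K * s ^ 3)
    (hXK : ‖quadraticPoly X₀ X₁ X₂ t‖ ≤ K) (hYK : ‖Y‖ ≤ K)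
    (hX₁ : ‖X₁‖ ≤ K) (hX₂ : ‖X₂‖ ≤ K) (hY₁ : ‖Y₁‖ ≤ K) (hY₂ : ‖Y₂‖ ≤ K) :
    ‖X * Y - quadraticCross X₀ X₁ X₂ Y₀ Y₁ Y₂ t s‖ ≤ (3 + T / 4) * K ^ 2 * t ^ 3 := by
  have hK : 0 ≤ K := (norm_nonneg _).trans hYK
  have ht : 0 ≤ t := hs.trans hst
  have hsmul : ∀ {c : ℝ} {U V : 𝔸}, 0 ≤ c → ‖U‖ ≤ K → ‖V‖ ≤ K → ‖c • (U * V)‖ ≤ c * K ^ 2 :=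
    fun hc hU hV => by
      rw [norm_smul, Real.norm_of_nonneg hc, sq]
      gcongr
      exact (norm_mul_le _ _).trans (by gcongr)
  have hXY : ‖(X - quadraticPoly X₀ X₁ X₂ t) * Y‖ ≤ K ^ 2 * t ^ 3 :=
    (norm_mul_le _ _).trans <| (mul_le_mul hX hYK (norm_nonneg _) (by positivity)).trans_eq
      (by ring)
  have hs3 : K * s ^ 3 ≤ K * t ^ 3 := by gcongr
  have hpY : ‖quadraticPoly X₀ X₁ X₂ t * (Y - quadraticPoly Y₀ Y₁ Y₂ s)‖ ≤ K ^ 2 * t ^ 3 :=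
    (norm_mul_le _ _).trans <| (mul_le_mul hXK (hY.trans hs3) (norm_nonneg _) hK).trans_eq
      (by ring)
  have h₁ := hsmul (c := t * s ^ 2 / 2) (by positivity) hX₁ hY₂
  have h₂ := hsmul (c := t ^ 2 * s / 2) (by positivity) hX₂ hY₁
  have h₃ := hsmul (c := t ^ 2 * s ^ 2 / 4) (by positivity) hX₂ hY₂
  have hc : t * s ^ 2 / 2 + t ^ 2 * s / 2 + t ^ 2 * s ^ 2 / 4 ≤ (1 + T / 4) * t ^ 3 := by
    have hss : s * s ≤ t * t := mul_le_mul hst hst hs ht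
    nlinarith [mul_le_mul_of_nonneg_left hss ht, mul_le_mul_of_nonneg_left hst (mul_nonneg ht ht),
      mul_le_mul_of_nonneg_left hss (mul_nonneg ht ht),
      mul_le_mul_of_nonneg_right htT (pow_nonneg ht 3)]
  have hcK := mul_le_mul_of_nonneg_right hc (sq_nonneg K)
  rw [mul_sub_quadraticCross t s h]
  refine (norm_add_le _ _).trans ?_
  refine (add_le_add (norm_add_le _ _) ((norm_add_le _ _).trans
    (add_le_add (norm_add_le _ _) le_rfl))).trans ?_
  linarith

end Expansion

section TriangleIntegral

/-- The domain `{(t, s) | 0 < s ≤ t ≤ δ}` of `∫₀^δ ∫₀ᵗ ⋯ ds dt`. -/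
def triangle (δ : ℝ) : Set (ℝ × ℝ) := {z | z.1 ≤ δ ∧ 0 < z.2 ∧ z.2 ≤ z.1}

theorem measurableSet_triangle (δ : ℝ) : MeasurableSet (triangle δ) :=
  (measurableSet_le measurable_fst measurable_const).inter
    ((measurableSet_lt measurable_const measurable_snd).inter
      (measurableSet_le measurable_snd measurable_fst))

theorem triangle_subset (δ : ℝ) : triangle δ ⊆ Ioc 0 δ ×ˢ Ioc 0 δ :=
  fun _ ⟨h₁, h₂, h₃⟩ => ⟨⟨h₂.trans_le h₃, h₁⟩, ⟨h₂, h₃.trans h₁⟩⟩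

theorem intervalIntegral_intervalIntegral_eq_setIntegral_triangle {F : ℝ × ℝ → ℝ} {δ : ℝ}
    (hδ : 0 ≤ δ) (hF : IntegrableOn F (triangle δ)) :
    ∫ t in 0..δ, ∫ s in 0..t, F (t, s) = ∫ z in triangle δ, F z := by
  have hF' : IntegrableOn ((triangle δ).indicator F) (Ioc 0 δ ×ˢ Ioc 0 δ) :=
    ((integrable_indicator_iff (measurableSet_triangle δ)).2 hF).integrableOn
  rw [← inter_eq_self_of_subset_right (triangle_subset δ),
    ← setIntegral_indicator (measurableSet_triangle δ), Measure.volume_eq_prod,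
    setIntegral_prod _ hF', intervalIntegral.integral_of_le hδ]
  refine setIntegral_congr_fun measurableSet_Ioc fun t ht => ?_
  rw [intervalIntegral.integral_of_le ht.1.le,
    ← inter_eq_self_of_subset_right (Ioc_subset_Ioc_right ht.2),
    ← setIntegral_indicator measurableSet_Ioc]
  refine setIntegral_congr_fun measurableSet_Ioc fun s _ => ?_
  simp [indicator, triangle, ht.2, and_comm]

theorem integrableOn_triangle_mul {f g : ℝ → ℝ} {H : ℝ × ℝ → ℝ} {δ : ℝ}
    (hf : MemLp f 2 (volume.restrict (Ioc 0 δ))) (hg : MemLp g 2 (volume.restrict (Ioc 0 δ)))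
    (hH : ContinuousOn H (Icc 0 δ ×ˢ Icc 0 δ)) :
    IntegrableOn (fun z => f z.1 * g z.2 * H z) (triangle δ) := by
  obtain ⟨C, hC⟩ := (isCompact_Icc.prod isCompact_Icc).exists_bound_of_continuousOn hH
  have hsub : triangle δ ⊆ Icc 0 δ ×ˢ Icc 0 δ :=
    (triangle_subset δ).trans (prod_mono Ioc_subset_Icc_self Ioc_subset_Icc_self)
  have hfg : IntegrableOn (fun z : ℝ × ℝ => f z.1 * g z.2) (Ioc 0 δ ×ˢ Ioc 0 δ) := by
    rw [IntegrableOn, Measure.volume_eq_prod, ← Measure.prod_restrict]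
    exact (hf.integrable one_le_two).mul_prod (hg.integrable one_le_two)
  exact (hfg.mono_set (triangle_subset δ)).mul_bdd
    ((hH.mono hsub).aestronglyMeasurable (measurableSet_triangle δ))
    ((ae_restrict_iff' (measurableSet_triangle δ)).2 (ae_of_all _ fun z hz => hC z (hsub hz)))

theorem abs_setIntegral_triangle_le {f g : ℝ → ℝ} {H : ℝ × ℝ → ℝ} {δ ε : ℝ} (hδ : 0 ≤ δ)
    (hε : 0 ≤ ε) (hf : MemLp f 2 (volume.restrict (Ioc 0 δ)))
    (hg : MemLp g 2 (volume.restrict (Ioc 0 δ))) (hHε : ∀ z ∈ triangle δ, |H z| ≤ ε) :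
    |∫ z in triangle δ, f z.1 * g z.2 * H z|
      ≤ ε * (δ * ((∫ t in Ioc 0 δ, f t ^ 2) + ∫ t in Ioc 0 δ, g t ^ 2) / 2) := by
  set μ := volume.restrict (Ioc (0 : ℝ) δ)
  let q : ℝ × ℝ → ℝ := fun z => ε * ((f z.1 ^ 2 + g z.2 ^ 2) / 2)
  have hq : Integrable q (μ.prod μ) :=
    (((hf.integrable_sq.comp_fst μ).add (hg.integrable_sq.comp_snd μ)).div_const 2).const_mul ε
  have hq' : IntegrableOn q (Ioc 0 δ ×ˢ Ioc 0 δ) := by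
    rwa [IntegrableOn, Measure.volume_eq_prod, ← Measure.prod_restrict]
  have hamgm : ∀ z ∈ triangle δ, ‖f z.1 * g z.2 * H z‖ ≤ q z := fun z hz => by
    rw [Real.norm_eq_abs, abs_mul, abs_mul, mul_comm]
    refine mul_le_mul (hHε z hz) ?_ (by positivity) hε
    nlinarith [sq_nonneg (|f z.1| - |g z.2|), sq_abs (f z.1), sq_abs (g z.2)]
  calc _ ≤ ∫ z in triangle δ, q z :=
        norm_integral_le_of_norm_le (hq'.mono_set (triangle_subset δ))
          ((ae_restrict_iff' (measurableSet_triangle δ)).2 (ae_of_all _ hamgm))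
    _ ≤ ∫ z in Ioc 0 δ ×ˢ Ioc 0 δ, q z :=
        setIntegral_mono_set hq' (ae_of_all _ fun z => by positivity)
          (triangle_subset δ).eventuallyLE
    _ = ∫ z, q z ∂(μ.prod μ) := by rw [Measure.volume_eq_prod, ← Measure.prod_restrict]
    _ = _ := by
        simp only [q, integral_const_mul, integral_div]
        rw [integral_add (hf.integrable_sq.comp_fst μ) (hg.integrable_sq.comp_snd μ),
          integral_fun_fst (fun t => f t ^ 2), integral_fun_snd (fun t => g t ^ 2)]
        rw [show μ.real univ = δ by simp [μ, hδ], smul_eq_mul, smul_eq_mul]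
        ring

theorem intervalIntegral_eq_of_ae_eq_zero {φ : ℝ → ℝ} {δ T : ℝ} (hδ : 0 ≤ δ) (hδT : δ ≤ T)
    (h : ∀ᵐ t, δ < t → φ t = 0) : ∫ t in 0..T, φ t = ∫ t in 0..δ, φ t := by
  rw [intervalIntegral.integral_of_le (hδ.trans hδT), intervalIntegral.integral_of_le hδ]
  exact setIntegral_eq_of_subset_of_ae_sdiff_eq_zero measurableSet_Ioc.nullMeasurableSet
    (Ioc_subset_Ioc_right hδT)
    (h.mono fun t ht hmem => ht (lt_of_not_ge fun h' => hmem.2 ⟨hmem.1.1, h'⟩))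

theorem abs_intervalIntegral_intervalIntegral_sub_le {f g : ℝ → ℝ} {G G₀ : ℝ × ℝ → ℝ}
    {T δ K : ℝ} (hδ : 0 < δ) (hδT : δ < T) (hK : 0 ≤ K) (hf : MemLp f 2 (volume.restrict (Ioc 0 T)))
    (hg : MemLp g 2 (volume.restrict (Ioc 0 T))) (hf0 : ∀ᵐ t, t ∉ Icc 0 δ → f t = 0)
    (hG : ContinuousOn G (Icc 0 T ×ˢ Icc 0 T)) (hG₀ : Continuous G₀)
    (hGG₀ : ∀ t s, 0 ≤ s → s ≤ t → t ≤ T → |G (t, s) - G₀ (t, s)| ≤ K * t ^ 3) :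
    |(∫ t in 0..T, ∫ s in 0..t, f t * g s * G (t, s))
        - ∫ t in 0..δ, ∫ s in 0..t, f t * g s * G₀ (t, s)|
      ≤ K * δ ^ 3 * (δ * ((∫ t in Ioc 0 δ, f t ^ 2) + ∫ t in Ioc 0 δ, g t ^ 2) / 2) := by
  have hμ : volume.restrict (Ioc 0 δ) ≤ volume.restrict (Ioc 0 T) :=
    Measure.restrict_mono (Ioc_subset_Ioc_right hδT.le) le_rfl
  have hfδ := hf.mono_measure hμ
  have hgδ := hg.mono_measure hμ
  have hGδ : ContinuousOn G (Icc 0 δ ×ˢ Icc 0 δ) :=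
    hG.mono (prod_mono (Icc_subset_Icc_right hδT.le) (Icc_subset_Icc_right hδT.le))
  have hT : ∫ t in 0..T, ∫ s in 0..t, f t * g s * G (t, s)
      = ∫ t in 0..δ, ∫ s in 0..t, f t * g s * G (t, s) :=
    intervalIntegral_eq_of_ae_eq_zero hδ.le hδT.le <| hf0.mono fun t ht htδ => by
      simp [ht fun h => htδ.not_ge h.2]
  have hGtri := intervalIntegral_intervalIntegral_eq_setIntegral_triangle hδ.le
    (integrableOn_triangle_mul hfδ hgδ hGδ)
  have hG₀tri := intervalIntegral_intervalIntegral_eq_setIntegral_triangle hδ.le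
    (integrableOn_triangle_mul hfδ hgδ hG₀.continuousOn)
  rw [hT, hGtri, hG₀tri, ← integral_sub (integrableOn_triangle_mul hfδ hgδ hGδ)
    (integrableOn_triangle_mul hfδ hgδ hG₀.continuousOn)]
  simp only [← mul_sub]
  refine abs_setIntegral_triangle_le hδ.le (by positivity) hfδ hgδ fun z hz => ?_
  refine (hGG₀ z.1 z.2 hz.2.1.le hz.2.2 (hz.1.trans hδT.le)).trans ?_
  have : 0 ≤ z.1 := hz.2.1.le.trans hz.2.2
  gcongr
  exact hz.1

theorem sum_setIntegral_sq_le_intervalIntegral {k : ℕ} {u : ℝ → Fin k → ℝ} {δ T : ℝ}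
    (hT : 0 ≤ T) (hδT : δ ≤ T) (hu : ∀ i, MemLp (u · i) 2 (volume.restrict (Ioc 0 T))) :
    ∑ i, ∫ t in Ioc 0 δ, u t i ^ 2 ≤ ∫ t in 0..T, ∑ i, u t i ^ 2 := by
  rw [intervalIntegral.integral_of_le hT, integral_finsetSum _ fun i _ => (hu i).integrable_sq]
  exact Finset.sum_le_sum fun i _ => setIntegral_mono_set (hu i).integrable_sq
    (ae_of_all _ fun t => sq_nonneg _) (Ioc_subset_Ioc_right hδT).eventuallyLE

end TriangleIntegral

section MatrixCalculus

attribute [local instance] Matrix.linftyOpNormedAddCommGroup Matrix.linftyOpNormedSpace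
  Matrix.linftyOpNormedRing Matrix.linftyOpNormedAlgebra

variable {ι : Type*} [Fintype ι]

noncomputable def matrixToPiCLE : Matrix ι ι ℝ ≃L[ℝ] (ι → ι → ℝ) :=
  (Matrix.ofLinearEquiv ℝ).symm.toContinuousLinearEquiv

theorem hasDerivWithinAt_matrix_iff {F : ℝ → Matrix ι ι ℝ} {F' : Matrix ι ι ℝ} {s : Set ℝ}
    {t : ℝ} : HasDerivWithinAt F F' s t ↔ ∀ a b, HasDerivWithinAt (F · a b) (F' a b) s t := by
  constructor
  · intro h
    have := (matrixToPiCLE (ι := ι)).hasFDerivAt.comp_hasDerivWithinAt t h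
    simp only [hasDerivWithinAt_pi] at this
    exact this
  · intro h
    have h' : HasDerivWithinAt (matrixToPiCLE ∘ F) (matrixToPiCLE F') s t := by
      simp only [hasDerivWithinAt_pi]
      exact h
    exact (matrixToPiCLE (ι := ι)).symm.hasFDerivAt.comp_hasDerivWithinAt t h'

theorem contDiffOn_matrix_iff {F : ℝ → Matrix ι ι ℝ} {s : Set ℝ} {n : WithTop ℕ∞} :
    ContDiffOn ℝ n F s ↔ ∀ a b, ContDiffOn ℝ n (F · a b) s := by
  rw [← (matrixToPiCLE (ι := ι)).comp_contDiffOn_iff, contDiffOn_pi]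
  simp only [contDiffOn_pi]
  rfl

theorem abs_trace_le (M : Matrix ι ι ℝ) : |trace M| ≤ Fintype.card ι * ‖M‖ := by
  refine (Finset.abs_sum_le_sum_abs _ _).trans ?_
  rw [← nsmul_eq_mul, ← Finset.card_univ]
  refine Finset.sum_le_card_nsmul _ _ _ fun a _ => ?_
  have : ‖M a a‖₊ ≤ ‖M‖₊ := by
    rw [linfty_opNNNorm_def]
    exact (Finset.single_le_sum (fun _ _ => zero_le) (Finset.mem_univ a)).trans
      (Finset.le_sup (f := fun i => ∑ j, ‖M i j‖₊) (Finset.mem_univ a))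
  exact_mod_cast this

variable [DecidableEq ι]

structure IsFundamentalSolution (T : ℝ) (A S : ℝ → Matrix ι ι ℝ) : Prop where
  map_zero : S 0 = 1
  hasDerivWithinAt : ∀ t ∈ Icc 0 T, HasDerivWithinAt S (A t * S t) (Icc 0 T) t

namespace IsFundamentalSolution

variable {T : ℝ} {A S : ℝ → Matrix ι ι ℝ}

theorem contDiffOn (hT : 0 < T) (hA : ContDiffOn ℝ ∞ A (Icc 0 T))
    (hS : IsFundamentalSolution T A S) : ContDiffOn ℝ ∞ S (Icc 0 T) :=
  contDiffOn_infty_of_hasDerivWithinAt (uniqueDiffOn_Icc hT) hS.hasDerivWithinAt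
    fun _ hSn => (hA.of_le (mod_cast le_top)).mul hSn

theorem isUnit (hA : ContinuousOn A (Icc 0 T)) (hS : IsFundamentalSolution T A S) :
    ∀ t ∈ Icc 0 T, IsUnit (S t) := by
  intro t₀ ht₀
  by_contra hS₀
  rw [isUnit_iff_isUnit_det, isUnit_iff_ne_zero, not_not] at hS₀
  obtain ⟨v, hv, hS₀v⟩ := exists_mulVec_eq_zero_iff.2 hS₀
  have hsub : Icc 0 t₀ ⊆ Icc 0 T := Icc_subset_Icc_right ht₀.2
  have hY := eqOn_zero_of_hasDerivWithinAt_mul_left (hA.mono hsub)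
    (Y := fun t => S t * replicateCol ι v) (fun t ht => by
      simpa only [mul_assoc] using
        ((hS.hasDerivWithinAt t (hsub ht)).mul_const (replicateCol ι v)).mono hsub)
    (by rw [← replicateCol_mulVec, hS₀v, replicateCol_zero])
  have := hY (left_mem_Icc.2 ht₀.1)
  simp only [hS.map_zero, one_mul, Pi.zero_apply] at this
  exact hv (funext fun a => congr_fun₂ this a a)

theorem hasDerivWithinAt_inv (hA : ContinuousOn A (Icc 0 T))
    (hS : IsFundamentalSolution T A S) :
    ∀ t ∈ Icc 0 T, HasDerivWithinAt (fun r => (S r)⁻¹) (-((S t)⁻¹ * A t)) (Icc 0 T) t := by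
  intro t ht
  obtain ⟨U, hU⟩ := hS.isUnit hA t ht
  have hinv := hasFDerivAt_ringInverse (𝕜 := ℝ) U
  rw [hU] at hinv
  simp only [nonsing_inv_eq_ringInverse]
  refine (hinv.comp_hasDerivWithinAt t (hS.hasDerivWithinAt t ht)).congr_deriv ?_
  simp [← hU, mul_assoc]

theorem contDiffOn_inv (hT : 0 < T) (hA : ContDiffOn ℝ ∞ A (Icc 0 T))
    (hS : IsFundamentalSolution T A S) : ContDiffOn ℝ ∞ (fun r => (S r)⁻¹) (Icc 0 T) :=
  contDiffOn_infty_of_hasDerivWithinAt (uniqueDiffOn_Icc hT)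
    (hS.hasDerivWithinAt_inv hA.continuousOn)
    fun _ hSn => (hSn.mul (hA.of_le (mod_cast le_top))).neg

theorem hasDerivWithinAt_conj (hA : ContinuousOn A (Icc 0 T)) (hS : IsFundamentalSolution T A S)
    {C : ℝ → Matrix ι ι ℝ} {C' : Matrix ι ι ℝ} {t : ℝ} (ht : t ∈ Icc 0 T)
    (hC : HasDerivWithinAt C C' (Icc 0 T) t) :
    HasDerivWithinAt (fun r => (S r)⁻¹ * C r * S r)
      ((S t)⁻¹ * (C' + C t * A t - A t * C t) * S t) (Icc 0 T) t := by
  refine (((hS.hasDerivWithinAt_inv hA t ht).mul hC).mul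
    (hS.hasDerivWithinAt t ht)).congr_deriv ?_
  simp only [Pi.mul_apply]
  noncomm_ring

theorem contDiffOn_conj (hT : 0 < T) (hA : ContDiffOn ℝ ∞ A (Icc 0 T))
    (hS : IsFundamentalSolution T A S) (B : Matrix ι ι ℝ) :
    ContDiffOn ℝ ∞ (fun r => (S r)⁻¹ * B * S r) (Icc 0 T) :=
  ((hS.contDiffOn_inv hT hA).mul contDiffOn_const).mul (hS.contDiffOn hT hA)

end IsFundamentalSolution

variable {m : ℕ} {T : ℝ} {A S : ℝ → Mat m}

theorem Bseq_succ_eq (hT : 0 < T) (B : Mat m) (j : ℕ) {t : ℝ} (ht : t ∈ Icc 0 T)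
    (hj : DifferentiableWithinAt ℝ (Bseq T A B j) (Icc 0 T) t) :
    Bseq T A B (j + 1) t = derivWithin (Bseq T A B j) (Icc 0 T) t
      + (Bseq T A B j t * A t - A t * Bseq T A B j t) := by
  rw [Bseq]
  congr 1
  ext a b
  exact (hasDerivWithinAt_matrix_iff.1 hj.hasDerivWithinAt a b).derivWithin
    (uniqueDiffOn_Icc hT t ht)

theorem contDiffOn_Bseq (hT : 0 < T) (hA : ContDiffOn ℝ ∞ A (Icc 0 T)) (B : Mat m) (j : ℕ) :
    ContDiffOn ℝ ∞ (Bseq T A B j) (Icc 0 T) := by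
  induction j with
  | zero => exact contDiffOn_const
  | succ j ih =>
    refine ((ih.derivWithin (uniqueDiffOn_Icc hT) le_rfl).add
      ((ih.mul hA).sub (hA.mul ih))).congr fun t ht => ?_
    exact Bseq_succ_eq hT B j ht (ih.differentiableOn (by simp) t ht)

theorem iteratedDerivWithin_conj (hT : 0 < T) (hA : ContDiffOn ℝ ∞ A (Icc 0 T))
    (hS : IsFundamentalSolution T A S) (B : Mat m) (j : ℕ) :
    ∀ t ∈ Icc 0 T, iteratedDerivWithin j (fun r => (S r)⁻¹ * B * S r) (Icc 0 T) t
      = (S t)⁻¹ * Bseq T A B j t * S t := by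
  induction j with
  | zero => intro t _; rw [iteratedDerivWithin_zero]; rfl
  | succ j ih =>
    intro t ht
    have hBj := (contDiffOn_Bseq hT hA B j).differentiableOn (by simp) t ht
    rw [iteratedDerivWithin_succ, derivWithin_congr ih (ih t ht), Bseq_succ_eq hT B j ht hBj,
      ← add_sub_assoc]
    exact (hS.hasDerivWithinAt_conj hA.continuousOn ht hBj.hasDerivWithinAt).derivWithin
      (uniqueDiffOn_Icc hT t ht)

theorem exists_norm_conj_sub_quadraticPoly_le (hT : 0 < T) (hA : ContDiffOn ℝ ∞ A (Icc 0 T))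
    (hS : IsFundamentalSolution T A S) (B : Mat m) :
    ∃ K, ∀ x ∈ Icc 0 T,
      ‖(S x)⁻¹ * B * S x - quadraticPoly B (Bseq T A B 1 0) (Bseq T A B 2 0) x‖ ≤ K * x ^ 3 := by
  obtain ⟨K, hK⟩ := exists_taylor_mean_remainder_bound (n := 2) hT.le
    ((hS.contDiffOn_conj hT hA B).of_le (WithTop.coe_le_coe.2 le_top))
  refine ⟨K, fun x hx => ?_⟩
  have h0 := fun j => iteratedDerivWithin_conj hT hA hS B j 0 (left_mem_Icc.2 hT.le)
  simp only [hS.map_zero, inv_one, one_mul, mul_one] at h0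
  have htaylor : taylorWithinEval (fun r => (S r)⁻¹ * B * S r) 2 (Icc 0 T) 0 x
      = quadraticPoly B (Bseq T A B 1 0) (Bseq T A B 2 0) x := by
    simp only [taylor_within_apply, Finset.sum_range_succ, Finset.sum_range_zero, h0]
    simp [quadraticPoly, Nat.factorial, div_eq_inv_mul]
    rfl
  have := hK x hx
  rwa [htaylor, sub_zero] at this

theorem eventually_norm_conj_le (hT : 0 < T) (hA : ContDiffOn ℝ ∞ A (Icc 0 T))
    (hS : IsFundamentalSolution T A S) (B : Mat m) :
    ∀ᶠ K in atTop, (∀ x ∈ Icc 0 T,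
      ‖(S x)⁻¹ * B * S x - quadraticPoly B (Bseq T A B 1 0) (Bseq T A B 2 0) x‖ ≤ K * x ^ 3
        ∧ ‖(S x)⁻¹ * B * S x‖ ≤ K ∧ ‖quadraticPoly B (Bseq T A B 1 0) (Bseq T A B 2 0) x‖ ≤ K)
      ∧ ‖Bseq T A B 1 0‖ ≤ K ∧ ‖Bseq T A B 2 0‖ ≤ K := by
  obtain ⟨K₁, h₁⟩ := exists_norm_conj_sub_quadraticPoly_le hT hA hS B
  obtain ⟨K₂, h₂⟩ :=
    isCompact_Icc.exists_bound_of_continuousOn (hS.contDiffOn_conj hT hA B).continuousOn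
  obtain ⟨K₃, h₃⟩ := isCompact_Icc.exists_bound_of_continuousOn (s := Icc 0 T)
    (f := quadraticPoly B (Bseq T A B 1 0) (Bseq T A B 2 0)) (by unfold quadraticPoly; fun_prop)
  filter_upwards [eventually_ge_atTop K₁, eventually_ge_atTop K₂, eventually_ge_atTop K₃,
    eventually_ge_atTop ‖Bseq T A B 1 0‖, eventually_ge_atTop ‖Bseq T A B 2 0‖]
    with K hK₁ hK₂ hK₃ hK₄ hK₅
  exact ⟨fun x hx => ⟨(h₁ x hx).trans (by gcongr; exact pow_nonneg hx.1 3),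
    (h₂ x hx).trans hK₂, (h₃ x hx).trans hK₃⟩, hK₄, hK₅⟩

theorem exists_abs_trace_sub_Pcal_le (hT : 0 < T) (hA : ContDiffOn ℝ ∞ A (Icc 0 T))
    (hS : IsFundamentalSolution T A S) {k : ℕ} (B : Fin k → Mat m) (hBB : ∀ i j, B i * B j = 0)
    (P : Mat m) :
    ∃ K ≥ 0, ∀ i j t s, 0 ≤ s → s ≤ t → t ≤ T →
      |trace (Pᵀ * (S T * ((S t)⁻¹ * B i * S t * ((S s)⁻¹ * B j * S s))))
        - Pcal T A S B P i j t s| ≤ K * t ^ 3 := by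
  obtain ⟨K, hK⟩ := (eventually_all.2 fun i => eventually_norm_conj_le hT hA hS (B i)).exists
  refine ⟨Fintype.card (Fin m ⊕ Fin m) * ‖Pᵀ * S T‖ * ((3 + T / 4) * K ^ 2), by positivity,
    fun i j t s hs hst htT => ?_⟩
  obtain ⟨hi, hi₁, hi₂⟩ := hK i
  obtain ⟨hj, hj₁, hj₂⟩ := hK j
  have hBij := norm_mul_sub_quadraticCross_le (hBB i j) hs hst htT
    (hi t ⟨hs.trans hst, htT⟩).1 (hj s ⟨hs, hst.trans htT⟩).1 (hi t ⟨hs.trans hst, htT⟩).2.2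
    (hj s ⟨hs, hst.trans htT⟩).2.1 hi₁ hi₂ hj₁ hj₂
  calc _ = |trace (Pᵀ * S T * ((S t)⁻¹ * B i * S t * ((S s)⁻¹ * B j * S s)
          - quadraticCross (B i) (Bseq T A (B i) 1 0) (Bseq T A (B i) 2 0) (B j)
            (Bseq T A (B j) 1 0) (Bseq T A (B j) 2 0) t s))| := by
        simp only [Pcal, quadraticCross, mul_sub, trace_sub, Matrix.mul_assoc]
    _ ≤ _ := (abs_trace_le _).trans <| (mul_le_mul_of_nonneg_left ((norm_mul_le _ _).trans
          (mul_le_mul_of_nonneg_left hBij (norm_nonneg _))) (Nat.cast_nonneg _)).trans_eq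
          (by ring)

theorem continuousOn_trace_conj_mul_conj (hT : 0 < T) (hA : ContDiffOn ℝ ∞ A (Icc 0 T))
    (hS : IsFundamentalSolution T A S) (P Bi Bj : Mat m) :
    ContinuousOn (fun z : ℝ × ℝ => trace (Pᵀ * (S T * ((S z.1)⁻¹ * Bi * S z.1
      * ((S z.2)⁻¹ * Bj * S z.2))))) (Icc 0 T ×ˢ Icc 0 T) := by
  refine continuous_id.matrix_trace.comp_continuousOn (continuousOn_const.mul
    (continuousOn_const.mul
      (((hS.contDiffOn_conj hT hA Bi).continuousOn.comp continuousOn_fst fun z hz => hz.1).mul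
        ((hS.contDiffOn_conj hT hA Bj).continuousOn.comp continuousOn_snd fun z hz => hz.2))))

theorem continuous_Pcal {k : ℕ} (B : Fin k → Mat m) (P : Mat m) (i j : Fin k) :
    Continuous fun z : ℝ × ℝ => Pcal T A S B P i j z.1 z.2 := by
  unfold Pcal
  fun_prop

end MatrixCalculus

/-- **Lemma `LEM20sept2`**: assuming `B_iB_j = 0` for all `i,j`, there is `C > 0` such that
for every `δ ∈ (0,T)` and every `u ∈ L²([0,T];ℝᵏ)` supported (a.e.) in `[0,δ]`,
`|P · D²₀E^{I,T}(u) − Q_δ(u)| ≤ C δ⁴ ‖u‖²_{L²}`. -/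
theorem quadratic_approximation {m k : ℕ} (T : ℝ) (hT : 0 < T)
    (A : ℝ → Mat m) (B : Fin k → Mat m)
    (hA : ∀ a b, ContDiffOn ℝ (⊤ : ℕ∞) (fun t => A t a b) (Set.Icc 0 T))
    (hBB : ∀ i j, B i * B j = 0)
    (S : ℝ → Mat m) (hS0 : S 0 = 1)
    (hS : ∀ t ∈ Set.Icc (0 : ℝ) T, ∀ a b,
      HasDerivWithinAt (fun r => S r a b) ((A t * S t) a b) (Set.Icc 0 T) t)
    (P : Mat m) :
    ∃ C > (0 : ℝ), ∀ δ : ℝ, 0 < δ → δ < T →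
      ∀ u : ℝ → Fin k → ℝ,
        MemLp u 2 (volume.restrict (Set.Ioc 0 T)) →
        (∀ᵐ t ∂(volume : Measure ℝ), t ∉ Set.Icc 0 δ → u t = 0) →
        |Phi T S B P u - Qdelta T A S B P δ u| ≤
          C * δ ^ 4 * ∫ t in (0 : ℝ)..T, ∑ i, (u t i) ^ 2 := by
  have hA' := contDiffOn_matrix_iff.2 hA
  have hSol : IsFundamentalSolution T A S :=
    ⟨hS0, fun t ht => hasDerivWithinAt_matrix_iff.2 (hS t ht)⟩
  obtain ⟨K, hK0, hK⟩ := exists_abs_trace_sub_Pcal_le hT hA' hSol B hBB P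
  refine ⟨2 * k * K + 1, by positivity, fun δ hδ hδT u hu hu0 => ?_⟩
  have hui : ∀ i, MemLp (u · i) 2 (volume.restrict (Ioc 0 T)) := memLp_pi_iff.1 hu
  set a : Fin k → ℝ := fun i => ∫ t in Ioc 0 δ, u t i ^ 2
  have hpair := fun i j => abs_intervalIntegral_intervalIntegral_sub_le hδ hδT hK0 (hui i) (hui j)
    (hu0.mono fun t ht h => by simp [ht h])
    (continuousOn_trace_conj_mul_conj hT hA' hSol P (B i) (B j))
    (continuous_Pcal B P i j) (hK i j)
  have hsum : ∑ i, a i ≤ ∫ t in 0..T, ∑ i, u t i ^ 2 :=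
    sum_setIntegral_sq_le_intervalIntegral hT.le hδT.le hui
  calc |Phi T S B P u - Qdelta T A S B P δ u|
      ≤ 2 * ∑ i, ∑ j, K * δ ^ 3 * (δ * (a i + a j) / 2) := by
        simp only [Phi, Qdelta, ← mul_sub, ← Finset.sum_sub_distrib, abs_mul, abs_two]
        gcongr
        exact (Finset.abs_sum_le_sum_abs _ _).trans <| Finset.sum_le_sum fun i _ =>
          (Finset.abs_sum_le_sum_abs _ _).trans <| Finset.sum_le_sum fun j _ => hpair i j
    _ = 2 * k * K * δ ^ 4 * ∑ i, a i := by
        simp only [mul_add, add_div, Finset.sum_add_distrib, ← Finset.mul_sum, ← Finset.sum_div,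
          Finset.sum_const, Finset.card_univ, Fintype.card_fin, nsmul_eq_mul]
        ring
    _ ≤ (2 * k * K + 1) * δ ^ 4 * ∫ t in 0..T, ∑ i, u t i ^ 2 := by
        gcongr
        linarith

end Stmt7
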